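/- arXiv:2308.10872 — 3 statements merged into one kernel-verified Lean document; each statement's English description precedes it below -/
import Mathlib

section
/- Among the four possible configurations of two edge-disjoint 4-cycles (sharing 0, 1, 2, or 3 vertices), only the configuration sharing two nonadjacent vertices (the double-diamond, i.e., the graph K_{2,4} viewed as two 4-cycles through the two degree-4 vertices) forms a 4-cycle bitrade of volume 2. -/
open Finset

/-- The edge set of the 4-cycle `(a, b, c, d)`. -/
def cyc {V : Type} [DecidableEq V] (a b c d : V) : Finset (Sym2 V) :=
  {s(a, b), s(b, c), s(c, d), s(d, a)}

/-- A finite set of edges forms a 4-cycle. -/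
def IsCycle4 {V : Type} [DecidableEq V] (E : Finset (Sym2 V)) : Prop :=
  ∃ a b c d : V, a ≠ b ∧ a ≠ c ∧ a ≠ d ∧ b ≠ c ∧ b ≠ d ∧ c ≠ d ∧ E = cyc a b c d

/-- Total edge set of a family of cycles. -/
def edgesOf {V : Type} [DecidableEq V] (T : Finset (Finset (Sym2 V))) : Finset (Sym2 V) :=
  T.biUnion id

/-- A family of pairwise edge-disjoint 4-cycles. -/
def EdgeDisjointFamily {V : Type} [DecidableEq V] (T : Finset (Finset (Sym2 V))) : Prop :=
  (∀ E ∈ T, IsCycle4 E) ∧ (T : Set (Finset (Sym2 V))).Pairwise Disjoint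

/-- A 4-cycle bitrade. -/
def IsBitrade {V : Type} [DecidableEq V] (T1 T2 : Finset (Finset (Sym2 V))) : Prop :=
  EdgeDisjointFamily T1 ∧ EdgeDisjointFamily T2 ∧ Disjoint T1 T2 ∧ edgesOf T1 = edgesOf T2

/-- The foundation: the number of vertices covered by the cycles of the family. -/
noncomputable def foundation {V : Type} [DecidableEq V] (T : Finset (Finset (Sym2 V))) : ℕ :=
  {v : V | ∃ E ∈ T, ∃ e ∈ E, v ∈ e}.ncard

/-- The vertex set covered by a set of edges. -/
def vertsOf {V : Type} [DecidableEq V] (E : Finset (Sym2 V)) : Set V :=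
  {v | ∃ e ∈ E, v ∈ e}

variable {V : Type} [DecidableEq V]

variable {V : Type} [DecidableEq V]

lemma cyc_rot (a b c d : V) : cyc a b c d = cyc b c d a := by
  ext e; simp [cyc]; tauto

lemma cyc_rev (a b c d : V) : cyc a b c d = cyc a d c b := by
  ext e
  simp only [cyc, mem_insert, mem_singleton]
  rw [show s(a,d) = s(d,a) from Sym2.eq_swap, show s(d,c) = s(c,d) from Sym2.eq_swap,
      show s(c,b) = s(b,c) from Sym2.eq_swap, show s(b,a) = s(a,b) from Sym2.eq_swap]
  tauto

lemma verts_cyc {v : V} {a b c d : V} :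
    v ∈ vertsOf (cyc a b c d) ↔ v = a ∨ v = b ∨ v = c ∨ v = d := by
  simp [vertsOf, cyc, Sym2.mem_iff]; tauto

lemma cyc_card {a b c d : V} (hab : a ≠ b) (hac : a ≠ c) (had : a ≠ d)
    (hbc : b ≠ c) (hbd : b ≠ d) (hcd : c ≠ d) : (cyc a b c d).card = 4 := by
  rw [cyc, card_insert_of_notMem, card_insert_of_notMem, card_insert_of_notMem,
    card_singleton] <;> simp [Sym2.eq_iff] <;> tauto

/-- two distinct non-edges of a 4-cycle among its vertices can't share a vertex -/
lemma no_two_diag {a b c d v1 v2 v3 : V} (hab : a ≠ b) (hac : a ≠ c) (had : a ≠ d)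
    (hbc : b ≠ c) (hbd : b ≠ d) (hcd : c ≠ d)
    (h12 : v1 ≠ v2) (h23 : v2 ≠ v3) (h13 : v1 ≠ v3)
    (hv1 : v1 ∈ vertsOf (cyc a b c d)) (hv2 : v2 ∈ vertsOf (cyc a b c d))
    (hv3 : v3 ∈ vertsOf (cyc a b c d))
    (he1 : s(v1,v2) ∉ cyc a b c d) (he2 : s(v2,v3) ∉ cyc a b c d) : False := by
  rw [verts_cyc] at hv1 hv2 hv3
  rcases hv1 with rfl|rfl|rfl|rfl <;> rcases hv2 with rfl|rfl|rfl|rfl <;>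
    rcases hv3 with rfl|rfl|rfl|rfl <;>
    simp_all [cyc, Sym2.eq_iff]

/-- pigeonhole: 3 distinct elements in a 3-element set hit everything -/
lemma pigeon3 {u w v x y z : V} (huw : u ≠ w) (huv : u ≠ v) (hwv : w ≠ v)
    (hu : u = x ∨ u = y ∨ u = z) (hw : w = x ∨ w = y ∨ w = z)
    (hv : v = x ∨ v = y ∨ v = z) :
    (x = u ∨ x = w ∨ x = v) ∧ (y = u ∨ y = w ∨ y = v) ∧ (z = u ∨ z = w ∨ z = v) := by
  have hBA : ({u,w,v} : Finset V) ⊆ {x,y,z} := by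
    intro t ht; simp at ht ⊢; rcases ht with rfl|rfl|rfl <;> tauto
  have hB : ({u,w,v} : Finset V).card = 3 := by
    rw [card_insert_of_notMem (by simp [huw, huv]),
      card_insert_of_notMem (by simp [hwv]), card_singleton]
  have hA : ({x,y,z} : Finset V).card ≤ 3 :=
    le_trans (card_insert_le _ _) (by
      have := card_insert_le y ({z} : Finset V); rw [card_singleton] at this; omega)
  have heq : ({u,w,v} : Finset V) = {x,y,z} :=
    Finset.eq_of_subset_of_card_le hBA (by omega)
  refine ⟨?_, ?_, ?_⟩ <;>
    [have : x ∈ ({u,w,v}:Finset V) := by { rw [heq]; simp };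
     have : y ∈ ({u,w,v}:Finset V) := by { rw [heq]; simp };
     have : z ∈ ({u,w,v}:Finset V) := by { rw [heq]; simp }] <;>
    simpa using this

lemma cyc_rot2 (a b c d : V) : cyc a b c d = cyc c d a b := by rw [cyc_rot, cyc_rot]
lemma cyc_rot3 (a b c d : V) : cyc a b c d = cyc d a b c := by rw [cyc_rot, cyc_rot, cyc_rot]
lemma cyc_rev2 (a b c d : V) : cyc a b c d = cyc d c b a := by rw [cyc_rev, cyc_rot]
lemma cyc_rev3 (a b c d : V) : cyc a b c d = cyc c b a d := by rw [cyc_rev, cyc_rot, cyc_rot]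
lemma cyc_swap (a b c d : V) : cyc a b c d = cyc b a d c := by
  rw [cyc_rev, cyc_rot, cyc_rot, cyc_rot]

lemma cyc_sub_eq {D C : Finset (Sym2 V)} (hD : IsCycle4 D) (hC : IsCycle4 C)
    (h : D ⊆ C) : D = C := by
  obtain ⟨a,b,c,d,h1,h2,h3,h4,h5,h6,rfl⟩ := hD
  obtain ⟨a',b',c',d',g1,g2,g3,g4,g5,g6,rfl⟩ := hC
  exact Finset.eq_of_subset_of_card_le h
    (by rw [cyc_card g1 g2 g3 g4 g5 g6, cyc_card h1 h2 h3 h4 h5 h6])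

lemma two_edges_at {D : Finset (Sym2 V)} (hD : IsCycle4 D) {v : V}
    (hv : v ∈ vertsOf D) :
    ∃ e1 e2, e1 ∈ D ∧ e2 ∈ D ∧ e1 ≠ e2 ∧ v ∈ e1 ∧ v ∈ e2 := by
  obtain ⟨a,b,c,d,h1,h2,h3,h4,h5,h6,rfl⟩ := hD
  rw [verts_cyc] at hv
  rcases hv with rfl|rfl|rfl|rfl
  · exact ⟨s(v,b), s(d,v), by simp [cyc], by simp [cyc],
      by simp [Sym2.eq_iff]; tauto, by simp, by simp⟩
  · exact ⟨s(a,v), s(v,c), by simp [cyc], by simp [cyc],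
      by simp [Sym2.eq_iff]; tauto, by simp, by simp⟩
  · exact ⟨s(b,v), s(v,d), by simp [cyc], by simp [cyc],
      by simp [Sym2.eq_iff]; tauto, by simp, by simp⟩
  · exact ⟨s(c,v), s(v,a), by simp [cyc], by simp [cyc],
      by simp [Sym2.eq_iff]; tauto, by simp, by simp⟩

lemma cyc_opp {a b c d u w : V} (h1 : a ≠ b) (h2 : a ≠ c) (h3 : a ≠ d)
    (h4 : b ≠ c) (h5 : b ≠ d) (h6 : c ≠ d)
    (hu : u ∈ vertsOf (cyc a b c d)) (hw : w ∈ vertsOf (cyc a b c d))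
    (huw : u ≠ w) (hno : s(u,w) ∉ cyc a b c d) :
    ∃ x y : V, u ≠ x ∧ u ≠ y ∧ w ≠ x ∧ w ≠ y ∧ x ≠ y ∧
      cyc a b c d = cyc u x w y := by
  rw [verts_cyc] at hu hw
  rcases hu with rfl|rfl|rfl|rfl <;> rcases hw with rfl|rfl|rfl|rfl
  · exact absurd rfl huw
  · exact absurd (by simp [cyc]) hno
  · exact ⟨b, d, by tauto, by tauto, by tauto, by tauto, by tauto, rfl⟩
  · exact absurd (by simp [cyc, Sym2.eq_iff]) hno
  · exact absurd (by simp [cyc, Sym2.eq_iff]) hno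
  · exact absurd rfl huw
  · exact absurd (by simp [cyc]) hno
  · exact ⟨c, a, by tauto, by tauto, by tauto, by tauto, by tauto, by rw [cyc_rot]⟩
  · exact ⟨d, b, by tauto, by tauto, by tauto, by tauto, by tauto, by rw [cyc_rot2]⟩
  · exact absurd (by simp [cyc, Sym2.eq_iff]) hno
  · exact absurd rfl huw
  · exact absurd (by simp [cyc]) hno
  · exact absurd (by simp [cyc, Sym2.eq_iff]) hno
  · exact ⟨a, c, by tauto, by tauto, by tauto, by tauto, by tauto, by rw [cyc_rot3]⟩
  · exact absurd (by simp [cyc, Sym2.eq_iff]) hno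
  · exact absurd rfl huw

lemma cyc_adj {a b c d u w : V} (h1 : a ≠ b) (h2 : a ≠ c) (h3 : a ≠ d)
    (h4 : b ≠ c) (h5 : b ≠ d) (h6 : c ≠ d)
    (h : s(u,w) ∈ cyc a b c d) :
    ∃ x y : V, u ≠ x ∧ u ≠ y ∧ w ≠ x ∧ w ≠ y ∧ x ≠ y ∧ u ≠ w ∧
      cyc a b c d = cyc u w x y := by
  simp only [cyc, mem_insert, mem_singleton, Sym2.eq_iff] at h
  rcases h with (⟨rfl,rfl⟩|⟨rfl,rfl⟩)|(⟨rfl,rfl⟩|⟨rfl,rfl⟩)|(⟨rfl,rfl⟩|⟨rfl,rfl⟩)|(⟨rfl,rfl⟩|⟨rfl,rfl⟩)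
  · exact ⟨c, d, by tauto, by tauto, by tauto, by tauto, by tauto, by tauto, rfl⟩
  · exact ⟨d, c, by tauto, by tauto, by tauto, by tauto, by tauto, by tauto, by rw [cyc_swap]⟩
  · exact ⟨d, a, by tauto, by tauto, by tauto, by tauto, by tauto, by tauto, by rw [cyc_rot]⟩
  · exact ⟨a, d, by tauto, by tauto, by tauto, by tauto, by tauto, by tauto, by rw [cyc_rev3]⟩
  · exact ⟨a, b, by tauto, by tauto, by tauto, by tauto, by tauto, by tauto, by rw [cyc_rot2]⟩
  · exact ⟨b, a, by tauto, by tauto, by tauto, by tauto, by tauto, by tauto, by rw [cyc_rev2]⟩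
  · exact ⟨b, c, by tauto, by tauto, by tauto, by tauto, by tauto, by tauto, by rw [cyc_rot3]⟩
  · exact ⟨c, b, by tauto, by tauto, by tauto, by tauto, by tauto, by tauto, by rw [cyc_rev]⟩

lemma three_shared_false {C1 C2 : Finset (Sym2 V)} (h1 : IsCycle4 C1) (h2 : IsCycle4 C2)
    (hdisj : Disjoint C1 C2) {u w v : V}
    (huw : u ≠ w) (huv : u ≠ v) (hwv : w ≠ v)
    (hu1 : u ∈ vertsOf C1) (hu2 : u ∈ vertsOf C2)
    (hw1 : w ∈ vertsOf C1) (hw2 : w ∈ vertsOf C2)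
    (hv1 : v ∈ vertsOf C1) (hv2 : v ∈ vertsOf C2) : False := by
  obtain ⟨a,b,c,d,g1,g2,g3,g4,g5,g6,hC1⟩ := h1
  obtain ⟨a',b',c',d',f1,f2,f3,f4,f5,f6,hC2⟩ := h2
  -- every edge of C2 is not in C1
  have hnotC1 : ∀ e ∈ C2, e ∉ C1 := fun e he => Finset.disjoint_right.mp hdisj he
  -- the key triple-killer
  have tri : ∀ x y z : V, x ≠ y → y ≠ z → x ≠ z →
      x ∈ vertsOf C1 → y ∈ vertsOf C1 → z ∈ vertsOf C1 →
      s(x,y) ∈ C2 → s(y,z) ∈ C2 → False := by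
    intro x y z hxy hyz hxz hx hy hz hexy heyz
    rw [hC1] at hx hy hz
    exact no_two_diag g1 g2 g3 g4 g5 g6 hxy hyz hxz hx hy hz
      (hC1 ▸ hnotC1 _ hexy) (hC1 ▸ hnotC1 _ heyz)
  -- slots of u, w, v in C2
  have hu' : u = a' ∨ u = b' ∨ u = c' ∨ u = d' := by
    rw [hC2, verts_cyc] at hu2; exact hu2
  have hw' : w = a' ∨ w = b' ∨ w = c' ∨ w = d' := by
    rw [hC2, verts_cyc] at hw2; exact hw2
  have hv' : v = a' ∨ v = b' ∨ v = c' ∨ v = d' := by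
    rw [hC2, verts_cyc] at hv2; exact hv2
  have sh : ∀ z : V, (z = u ∨ z = w ∨ z = v) → z ∈ vertsOf C1 := by
    rintro z (rfl|rfl|rfl) <;> assumption
  have eAB : s(a',b') ∈ C2 := by rw [hC2]; simp [cyc]
  have eBC : s(b',c') ∈ C2 := by rw [hC2]; simp [cyc]
  have eCD : s(c',d') ∈ C2 := by rw [hC2]; simp [cyc]
  have eDA : s(d',a') ∈ C2 := by rw [hC2]; simp [cyc]
  by_cases hA : a' = u ∨ a' = w ∨ a' = v
  · by_cases hB : b' = u ∨ b' = w ∨ b' = v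
    · by_cases hC : c' = u ∨ c' = w ∨ c' = v
      · exact tri a' b' c' f1 f4 f2 (sh _ hA) (sh _ hB) (sh _ hC) eAB eBC
      · -- c' excluded: u,w,v ∈ {d',a',b'}
        have hu'' : u = d' ∨ u = a' ∨ u = b' := by
          rcases hu' with h|h|h|h
          exacts [Or.inr (Or.inl h), Or.inr (Or.inr h),
            absurd h.symm (fun hh => hC (Or.inl hh)), Or.inl h]
        have hw'' : w = d' ∨ w = a' ∨ w = b' := by
          rcases hw' with h|h|h|h
          exacts [Or.inr (Or.inl h), Or.inr (Or.inr h),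
            absurd h.symm (fun hh => hC (Or.inr (Or.inl hh))), Or.inl h]
        have hv'' : v = d' ∨ v = a' ∨ v = b' := by
          rcases hv' with h|h|h|h
          exacts [Or.inr (Or.inl h), Or.inr (Or.inr h),
            absurd h.symm (fun hh => hC (Or.inr (Or.inr hh))), Or.inl h]
        obtain ⟨pd, pa, pb⟩ := pigeon3 huw huv hwv hu'' hw'' hv''
        exact tri d' a' b' (Ne.symm f3) f1 (Ne.symm f5) (sh _ pd) (sh _ pa) (sh _ pb) eDA eAB
    · -- b' excluded: u,w,v ∈ {c',d',a'}
      have hu'' : u = c' ∨ u = d' ∨ u = a' := by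
        rcases hu' with h|h|h|h
        exacts [Or.inr (Or.inr h), absurd h.symm (fun hh => hB (Or.inl hh)),
          Or.inl h, Or.inr (Or.inl h)]
      have hw'' : w = c' ∨ w = d' ∨ w = a' := by
        rcases hw' with h|h|h|h
        exacts [Or.inr (Or.inr h), absurd h.symm (fun hh => hB (Or.inr (Or.inl hh))),
          Or.inl h, Or.inr (Or.inl h)]
      have hv'' : v = c' ∨ v = d' ∨ v = a' := by
        rcases hv' with h|h|h|h
        exacts [Or.inr (Or.inr h), absurd h.symm (fun hh => hB (Or.inr (Or.inr hh))),
          Or.inl h, Or.inr (Or.inl h)]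
      obtain ⟨pc, pd, pa⟩ := pigeon3 huw huv hwv hu'' hw'' hv''
      exact tri c' d' a' f6 (Ne.symm f3) (Ne.symm f2) (sh _ pc) (sh _ pd) (sh _ pa) eCD eDA
  · -- a' excluded: u,w,v ∈ {b',c',d'}
    have hu'' : u = b' ∨ u = c' ∨ u = d' := by
      rcases hu' with h|h|h|h
      exacts [absurd h.symm (fun hh => hA (Or.inl hh)), Or.inl h,
        Or.inr (Or.inl h), Or.inr (Or.inr h)]
    have hw'' : w = b' ∨ w = c' ∨ w = d' := by
      rcases hw' with h|h|h|h
      exacts [absurd h.symm (fun hh => hA (Or.inr (Or.inl hh))), Or.inl h,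
        Or.inr (Or.inl h), Or.inr (Or.inr h)]
    have hv'' : v = b' ∨ v = c' ∨ v = d' := by
      rcases hv' with h|h|h|h
      exacts [absurd h.symm (fun hh => hA (Or.inr (Or.inr hh))), Or.inl h,
        Or.inr (Or.inl h), Or.inr (Or.inr h)]
    obtain ⟨pb, pc, pd⟩ := pigeon3 huw huv hwv hu'' hw'' hv''
    exact tri b' c' d' f4 f6 f5 (sh _ pb) (sh _ pc) (sh _ pd) eBC eCD

lemma pigeon4 {u w x y α β γ δ : V}
    (d1 : u ≠ w) (d2 : u ≠ x) (d3 : u ≠ y) (d4 : w ≠ x) (d5 : w ≠ y) (d6 : x ≠ y)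
    (hu : u = α ∨ u = β ∨ u = γ ∨ u = δ) (hw : w = α ∨ w = β ∨ w = γ ∨ w = δ)
    (hx : x = α ∨ x = β ∨ x = γ ∨ x = δ) (hy : y = α ∨ y = β ∨ y = γ ∨ y = δ)
    {z : V} (hz : z = α ∨ z = β ∨ z = γ ∨ z = δ) :
    z = u ∨ z = w ∨ z = x ∨ z = y := by
  have hBA : ({u,w,x,y} : Finset V) ⊆ {α,β,γ,δ} := by
    intro t ht; simp at ht ⊢; rcases ht with rfl|rfl|rfl|rfl <;> tauto
  have hB : ({u,w,x,y} : Finset V).card = 4 := by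
    rw [card_insert_of_notMem (by simp [d1, d2, d3]),
      card_insert_of_notMem (by simp [d4, d5]),
      card_insert_of_notMem (by simp [d6]), card_singleton]
  have hA : ({α,β,γ,δ} : Finset V).card ≤ 4 := by
    have h2 : ({γ,δ} : Finset V).card ≤ 2 := le_trans (card_insert_le _ _) (by simp)
    have h3 : ({β,γ,δ} : Finset V).card ≤ 3 :=
      le_trans (card_insert_le _ _) (by omega)
    exact le_trans (card_insert_le _ _) (by omega)
  have heq : ({u,w,x,y} : Finset V) = {α,β,γ,δ} :=
    Finset.eq_of_subset_of_card_le hBA (by omega)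
  have : z ∈ ({u,w,x,y} : Finset V) := by
    rw [heq]; simp; tauto
  simpa using this

set_option maxHeartbeats 2000000 in
lemma no_adj {C1 C2 D1 D2 : Finset (Sym2 V)} (h1 : IsCycle4 C1) (h2 : IsCycle4 C2)
    (hD1 : IsCycle4 D1) (hD2 : IsCycle4 D2)
    (hdisjC : Disjoint C1 C2) (hU : C1 ∪ C2 = D1 ∪ D2)
    (hne11 : D1 ≠ C1) (hne21 : D2 ≠ C1)
    {u w : V} (huw : u ≠ w)
    (hinter : vertsOf C1 ∩ vertsOf C2 = {u, w}) :
    s(u,w) ∉ C1 := by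
  intro hadj
  have hu12 : u ∈ vertsOf C1 ∩ vertsOf C2 := by rw [hinter]; exact Or.inl rfl
  have hw12 : w ∈ vertsOf C1 ∩ vertsOf C2 := by rw [hinter]; exact Or.inr rfl
  obtain ⟨a,b,c,d,g1,g2,g3,g4,g5,g6,hC1⟩ := h1
  obtain ⟨x, y, hux, huy, hwx, hwy, hxy, _, hxy'⟩ :=
    cyc_adj g1 g2 g3 g4 g5 g6 (show s(u,w) ∈ cyc a b c d from hC1 ▸ hadj)
  have hC1' : C1 = cyc u w x y := hC1.trans hxy'
  obtain ⟨a',b',c',d',f1,f2,f3,f4,f5,f6,hC2⟩ := h2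
  have hnoC2 : s(u,w) ∉ C2 := Finset.disjoint_left.mp hdisjC hadj
  obtain ⟨p, q, hup, huq, hwp, hwq, hpq, hpq'⟩ :=
    cyc_opp f1 f2 f3 f4 f5 f6 (by rw [← hC2]; exact hu12.2) (by rw [← hC2]; exact hw12.2)
      huw (by rw [← hC2]; exact hnoC2)
  have hC2' : C2 = cyc u p w q := hC2.trans hpq'
  -- x, y not in C2; p, q not in C1
  have hnotin : ∀ z : V, z ∈ vertsOf C1 → z ≠ u → z ≠ w → z ∉ vertsOf C2 := by
    intro z hz1 hzu hzw hz2
    have : z ∈ vertsOf C1 ∩ vertsOf C2 := ⟨hz1, hz2⟩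
    rw [hinter] at this
    rcases this with h|h
    exacts [hzu h, hzw h]
  have hx2 : x ∉ vertsOf C2 :=
    hnotin x (by rw [hC1', verts_cyc]; tauto) (Ne.symm hux) (Ne.symm hwx)
  have hy2 : y ∉ vertsOf C2 :=
    hnotin y (by rw [hC1', verts_cyc]; tauto) (Ne.symm huy) (Ne.symm hwy)
  have hxp : x ≠ p := fun h => hx2 (by rw [hC2', verts_cyc]; tauto)
  have hxq : x ≠ q := fun h => hx2 (by rw [hC2', verts_cyc]; tauto)
  have hyp : y ≠ p := fun h => hy2 (by rw [hC2', verts_cyc]; tauto)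
  have hyq : y ≠ q := fun h => hy2 (by rw [hC2', verts_cyc]; tauto)
  -- edges at y and at x in the union
  have ey : ∀ e ∈ C1 ∪ C2, y ∈ e → e = s(x,y) ∨ e = s(y,u) := by
    intro e he hye
    have hyu : y ≠ u := Ne.symm huy
    have hyw : y ≠ w := Ne.symm hwy
    rw [Finset.mem_union, hC1', hC2'] at he
    rcases he with he|he <;>
      simp only [cyc, mem_insert, mem_singleton] at he <;>
      rcases he with rfl|rfl|rfl|rfl <;>
      simp only [Sym2.mem_iff] at hye <;> tauto
  have ex : ∀ e ∈ C1 ∪ C2, x ∈ e → e = s(w,x) ∨ e = s(x,y) := by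
    intro e he hxe
    have hxu : x ≠ u := Ne.symm hux
    have hxw : x ≠ w := Ne.symm hwx
    rw [Finset.mem_union, hC1', hC2'] at he
    rcases he with he|he <;>
      simp only [cyc, mem_insert, mem_singleton] at he <;>
      rcases he with rfl|rfl|rfl|rfl <;>
      simp only [Sym2.mem_iff] at hxe <;> tauto
  -- main claim: y is not a vertex of any 4-cycle D ⊆ C1 ∪ C2 with D ≠ C1
  have key : ∀ D : Finset (Sym2 V), IsCycle4 D → D ⊆ C1 ∪ C2 → D ≠ C1 →
      y ∉ vertsOf D := by
    intro D hD hsub hneq hyD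
    obtain ⟨e1, e2, he1, he2, hne, hy1, hy2⟩ := two_edges_at hD hyD
    have c1 := ey e1 (hsub he1) hy1
    have c2 := ey e2 (hsub he2) hy2
    have hxyD : s(x,y) ∈ D ∧ s(y,u) ∈ D := by
      rcases c1 with rfl|rfl <;> rcases c2 with rfl|rfl
      · exact absurd rfl hne
      · exact ⟨he1, he2⟩
      · exact ⟨he2, he1⟩
      · exact absurd rfl hne
    have hxD : x ∈ vertsOf D := ⟨s(x,y), hxyD.1, by simp⟩
    obtain ⟨f1', f2', hf1, hf2, hnef, hx1, hx2'⟩ := two_edges_at hD hxD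
    have d1 := ex f1' (hsub hf1) hx1
    have d2 := ex f2' (hsub hf2) hx2'
    have hwxD : s(w,x) ∈ D := by
      rcases d1 with rfl|rfl <;> rcases d2 with rfl|rfl
      · exact hf1
      · exact hf1
      · exact hf2
      · exact absurd rfl hnef
    have huD : u ∈ vertsOf D := ⟨s(y,u), hxyD.2, by simp⟩
    have hwD : w ∈ vertsOf D := ⟨s(w,x), hwxD, by simp⟩
    -- vertices of D are exactly u, w, x, y
    obtain ⟨α,β,γ,δ,k1,k2,k3,k4,k5,k6,hDf⟩ := hD
    have slot : ∀ z : V, z ∈ vertsOf D → z = α ∨ z = β ∨ z = γ ∨ z = δ := by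
      intro z hz; rw [hDf, verts_cyc] at hz; exact hz
    have key4 : ∀ z : V, z ∈ vertsOf D → z = u ∨ z = w ∨ z = x ∨ z = y :=
      fun z hz => pigeon4 huw hux huy hwx hwy hxy
        (slot u huD) (slot w hwD) (slot x hxD) (slot y hyD) (slot z hz)
    -- D ⊆ C1
    have hsubC1 : D ⊆ C1 := by
      intro e heD
      rcases Finset.mem_union.mp (hsub heD) with he|he
      · exact he
      · exfalso
        rw [hC2'] at he
        simp only [cyc, mem_insert, mem_singleton] at he
        have hpq4 : (p = u ∨ p = w ∨ p = x ∨ p = y) ∨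
            (q = u ∨ q = w ∨ q = x ∨ q = y) := by
          rcases he with rfl|rfl|rfl|rfl
          · exact Or.inl (key4 p ⟨s(u,p), heD, by simp⟩)
          · exact Or.inl (key4 p ⟨s(p,w), heD, by simp⟩)
          · exact Or.inr (key4 q ⟨s(w,q), heD, by simp⟩)
          · exact Or.inr (key4 q ⟨s(q,u), heD, by simp⟩)
        rcases hpq4 with (h|h|h|h)|(h|h|h|h) <;>
          first
            | exact hup h.symm
            | exact hwp h.symm
            | exact hxp h.symm
            | exact hyp h.symm
            | exact huq h.symm
            | exact hwq h.symm
            | exact hxq h.symm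
            | exact hyq h.symm
    exact hneq (cyc_sub_eq ⟨α,β,γ,δ,k1,k2,k3,k4,k5,k6,hDf⟩
      ⟨u,w,x,y, huw, hux, huy, hwx, hwy, hxy, hC1'⟩ hsubC1)
  -- but s(x,y) must lie in D1 or D2
  have hxyE : s(x,y) ∈ D1 ∪ D2 := by
    rw [← hU, Finset.mem_union]; left; rw [hC1']; simp [cyc]
  rcases Finset.mem_union.mp hxyE with h|h
  · exact key D1 hD1 (hU ▸ Finset.subset_union_left) hne11 ⟨s(x,y), h, by simp⟩
  · exact key D2 hD2 (hU ▸ Finset.subset_union_right) hne21 ⟨s(x,y), h, by simp⟩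


lemma edgesOf_pair (A B : Finset (Sym2 V)) : edgesOf {A, B} = A ∪ B := by
  simp [edgesOf]

lemma exists_shared {C1 C2 D1 : Finset (Sym2 V)} (h1 : IsCycle4 C1) (h2 : IsCycle4 C2)
    (hD1 : IsCycle4 D1) (hsub : D1 ⊆ C1 ∪ C2)
    (hne1 : D1 ≠ C1) (hne2 : D1 ≠ C2) :
    ∃ u w : V, u ≠ w ∧ u ∈ vertsOf C1 ∧ u ∈ vertsOf C2 ∧
      w ∈ vertsOf C1 ∧ w ∈ vertsOf C2 := by
  obtain ⟨p,q,r,t,k1,k2,k3,k4,k5,k6,hDf⟩ := hD1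
  have hndC1 : ¬ D1 ⊆ C1 := fun h => hne1 (cyc_sub_eq ⟨p,q,r,t,k1,k2,k3,k4,k5,k6,hDf⟩ h1 h)
  have hndC2 : ¬ D1 ⊆ C2 := fun h => hne2 (cyc_sub_eq ⟨p,q,r,t,k1,k2,k3,k4,k5,k6,hDf⟩ h2 h)
  have m1 : s(p,q) ∈ C1 ∪ C2 := hsub (by rw [hDf]; simp [cyc])
  have m2 : s(q,r) ∈ C1 ∪ C2 := hsub (by rw [hDf]; simp [cyc])
  have m3 : s(r,t) ∈ C1 ∪ C2 := hsub (by rw [hDf]; simp [cyc])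
  have m4 : s(t,p) ∈ C1 ∪ C2 := hsub (by rw [hDf]; simp [cyc])
  have sub1 : ∀ e1 : s(p,q) ∈ C1, ∀ e2 : s(q,r) ∈ C1, ∀ e3 : s(r,t) ∈ C1,
      ∀ e4 : s(t,p) ∈ C1, D1 ⊆ C1 := by
    intro e1 e2 e3 e4 e he
    rw [hDf] at he
    simp only [cyc, mem_insert, mem_singleton] at he
    rcases he with rfl|rfl|rfl|rfl
    exacts [e1, e2, e3, e4]
  have sub2 : ∀ e1 : s(p,q) ∈ C2, ∀ e2 : s(q,r) ∈ C2, ∀ e3 : s(r,t) ∈ C2,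
      ∀ e4 : s(t,p) ∈ C2, D1 ⊆ C2 := by
    intro e1 e2 e3 e4 e he
    rw [hDf] at he
    simp only [cyc, mem_insert, mem_singleton] at he
    rcases he with rfl|rfl|rfl|rfl
    exacts [e1, e2, e3, e4]
  rcases Finset.mem_union.mp m1 with e1|e1 <;>
    rcases Finset.mem_union.mp m2 with e2|e2 <;>
    rcases Finset.mem_union.mp m3 with e3|e3 <;>
    rcases Finset.mem_union.mp m4 with e4|e4
  · exact absurd (sub1 e1 e2 e3 e4) hndC1
  · exact ⟨t, p, Ne.symm k3, ⟨_, e3, by simp⟩, ⟨_, e4, by simp⟩, ⟨_, e1, by simp⟩, ⟨_, e4, by simp⟩⟩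
  · exact ⟨r, t, k6, ⟨_, e2, by simp⟩, ⟨_, e3, by simp⟩, ⟨_, e4, by simp⟩, ⟨_, e3, by simp⟩⟩
  · exact ⟨r, p, Ne.symm k2, ⟨_, e2, by simp⟩, ⟨_, e3, by simp⟩, ⟨_, e1, by simp⟩, ⟨_, e4, by simp⟩⟩
  · exact ⟨q, r, k4, ⟨_, e1, by simp⟩, ⟨_, e2, by simp⟩, ⟨_, e3, by simp⟩, ⟨_, e2, by simp⟩⟩
  · exact ⟨q, r, k4, ⟨_, e1, by simp⟩, ⟨_, e2, by simp⟩, ⟨_, e3, by simp⟩, ⟨_, e2, by simp⟩⟩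
  · exact ⟨q, t, k5, ⟨_, e1, by simp⟩, ⟨_, e2, by simp⟩, ⟨_, e4, by simp⟩, ⟨_, e3, by simp⟩⟩
  · exact ⟨q, p, Ne.symm k1, ⟨_, e1, by simp⟩, ⟨_, e2, by simp⟩, ⟨_, e1, by simp⟩, ⟨_, e4, by simp⟩⟩
  · exact ⟨q, p, Ne.symm k1, ⟨_, e2, by simp⟩, ⟨_, e1, by simp⟩, ⟨_, e4, by simp⟩, ⟨_, e1, by simp⟩⟩
  · exact ⟨q, t, k5, ⟨_, e2, by simp⟩, ⟨_, e1, by simp⟩, ⟨_, e3, by simp⟩, ⟨_, e4, by simp⟩⟩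
  · exact ⟨q, r, k4, ⟨_, e2, by simp⟩, ⟨_, e1, by simp⟩, ⟨_, e2, by simp⟩, ⟨_, e3, by simp⟩⟩
  · exact ⟨q, r, k4, ⟨_, e2, by simp⟩, ⟨_, e1, by simp⟩, ⟨_, e2, by simp⟩, ⟨_, e3, by simp⟩⟩
  · exact ⟨r, p, Ne.symm k2, ⟨_, e3, by simp⟩, ⟨_, e2, by simp⟩, ⟨_, e4, by simp⟩, ⟨_, e1, by simp⟩⟩
  · exact ⟨r, t, k6, ⟨_, e3, by simp⟩, ⟨_, e2, by simp⟩, ⟨_, e3, by simp⟩, ⟨_, e4, by simp⟩⟩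
  · exact ⟨t, p, Ne.symm k3, ⟨_, e4, by simp⟩, ⟨_, e3, by simp⟩, ⟨_, e4, by simp⟩, ⟨_, e1, by simp⟩⟩
  · exact absurd (sub2 e1 e2 e3 e4) hndC2


set_option maxHeartbeats 2000000 in
theorem bitrade_volume_two_iff_double_diamond {V : Type} [DecidableEq V]
    (C1 C2 : Finset (Sym2 V)) (h1 : IsCycle4 C1) (h2 : IsCycle4 C2)
    (hdisj : Disjoint C1 C2) (hne : C1 ≠ C2) :
    (∃ T2 : Finset (Finset (Sym2 V)), IsBitrade {C1, C2} T2 ∧ T2.card = 2) ↔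
      (∃ u w : V, u ≠ w ∧ vertsOf C1 ∩ vertsOf C2 = {u, w} ∧
        s(u, w) ∉ C1 ∧ s(u, w) ∉ C2) := by
  constructor
  · rintro ⟨T2, ⟨hFam1, hFam2, hTdisj, hedges⟩, hcard⟩
    obtain ⟨D1, D2, hD12ne, rfl⟩ := Finset.card_eq_two.mp hcard
    have hD1c : IsCycle4 D1 := hFam2.1 D1 (by simp)
    have hD2c : IsCycle4 D2 := hFam2.1 D2 (by simp)
    have hU : C1 ∪ C2 = D1 ∪ D2 := by
      have := hedges
      rwa [edgesOf_pair, edgesOf_pair] at this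
    have hC1n : C1 ∉ ({D1, D2} : Finset (Finset (Sym2 V))) :=
      Finset.disjoint_left.mp hTdisj (by simp)
    have hC2n : C2 ∉ ({D1, D2} : Finset (Finset (Sym2 V))) :=
      Finset.disjoint_left.mp hTdisj (by simp)
    simp only [Finset.mem_insert, Finset.mem_singleton, not_or] at hC1n hC2n
    have hne11 : D1 ≠ C1 := fun h => hC1n.1 h.symm
    have hne12 : D1 ≠ C2 := fun h => hC2n.1 h.symm
    have hne21 : D2 ≠ C1 := fun h => hC1n.2 h.symm
    have hne22 : D2 ≠ C2 := fun h => hC2n.2 h.symm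
    obtain ⟨u, w, huw, hu1, hu2, hw1, hw2⟩ :=
      exists_shared h1 h2 hD1c (hU ▸ Finset.subset_union_left) hne11 hne12
    have hinter : vertsOf C1 ∩ vertsOf C2 = {u, w} := by
      apply Set.eq_of_subset_of_subset
      · intro z hz
        by_contra hzc
        simp only [Set.mem_insert_iff, Set.mem_singleton_iff, not_or] at hzc
        exact three_shared_false h1 h2 hdisj huw (fun h => hzc.1 h.symm)
          (fun h => hzc.2 h.symm) hu1 hu2 hw1 hw2 hz.1 hz.2
      · rintro z (rfl|rfl)
        exacts [⟨hu1, hu2⟩, ⟨hw1, hw2⟩]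
    refine ⟨u, w, huw, hinter, ?_, ?_⟩
    · exact no_adj h1 h2 hD1c hD2c hdisj hU hne11 hne21 huw hinter
    · exact no_adj h2 h1 hD1c hD2c hdisj.symm
        (by rw [Finset.union_comm]; exact hU) hne12 hne22 huw
        (by rw [Set.inter_comm]; exact hinter)
  · rintro ⟨u, w, huw, hinter, hnot1, hnot2⟩
    have hu12 : u ∈ vertsOf C1 ∩ vertsOf C2 := by rw [hinter]; exact Or.inl rfl
    have hw12 : w ∈ vertsOf C1 ∩ vertsOf C2 := by rw [hinter]; exact Or.inr rfl
    obtain ⟨a,b,c,d,g1,g2,g3,g4,g5,g6,hC1⟩ := h1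
    obtain ⟨x, y, hux, huy, hwx, hwy, hxy, hxy'⟩ :=
      cyc_opp g1 g2 g3 g4 g5 g6 (by rw [← hC1]; exact hu12.1) (by rw [← hC1]; exact hw12.1)
        huw (by rw [← hC1]; exact hnot1)
    have hC1' : C1 = cyc u x w y := hC1.trans hxy'
    obtain ⟨a',b',c',d',f1,f2,f3,f4,f5,f6,hC2⟩ := h2
    obtain ⟨p, q, hup, huq, hwp, hwq, hpq, hpq'⟩ :=
      cyc_opp f1 f2 f3 f4 f5 f6 (by rw [← hC2]; exact hu12.2) (by rw [← hC2]; exact hw12.2)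
        huw (by rw [← hC2]; exact hnot2)
    have hC2' : C2 = cyc u p w q := hC2.trans hpq'
    have hnotin : ∀ z : V, z ∈ vertsOf C1 → z ≠ u → z ≠ w → z ∉ vertsOf C2 := by
      intro z hz1 hzu hzw hz2
      have : z ∈ vertsOf C1 ∩ vertsOf C2 := ⟨hz1, hz2⟩
      rw [hinter] at this
      rcases this with h|h
      exacts [hzu h, hzw h]
    have hx2 : x ∉ vertsOf C2 :=
      hnotin x (by rw [hC1', verts_cyc]; tauto) (Ne.symm hux) (Ne.symm hwx)
    have hy2 : y ∉ vertsOf C2 :=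
      hnotin y (by rw [hC1', verts_cyc]; tauto) (Ne.symm huy) (Ne.symm hwy)
    have hxp : x ≠ p := fun h => hx2 (by rw [hC2', verts_cyc]; tauto)
    have hxq : x ≠ q := fun h => hx2 (by rw [hC2', verts_cyc]; tauto)
    have hyp : y ≠ p := fun h => hy2 (by rw [hC2', verts_cyc]; tauto)
    have hyq : y ≠ q := fun h => hy2 (by rw [hC2', verts_cyc]; tauto)
    set D1 : Finset (Sym2 V) := cyc u x w p with hD1def
    set D2 : Finset (Sym2 V) := cyc u y w q with hD2def
    have hD1c : IsCycle4 D1 := ⟨u, x, w, p, hux, huw, hup, Ne.symm hwx, hxp, hwp, rfl⟩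
    have hD2c : IsCycle4 D2 := ⟨u, y, w, q, huy, huw, huq, Ne.symm hwy, hyq, hwq, rfl⟩
    have hdisjD : Disjoint D1 D2 := by
      rw [Finset.disjoint_left]
      intro e he1 he2
      rw [hD1def] at he1
      rw [hD2def] at he2
      simp only [cyc, mem_insert, mem_singleton] at he1 he2
      rcases he1 with rfl|rfl|rfl|rfl <;>
        simp only [Sym2.eq_iff] at he2 <;> tauto
    have hD12 : D1 ≠ D2 := by
      intro h
      rw [h, disjoint_self, Finset.bot_eq_empty] at hdisjD
      have : s(u,y) ∈ D2 := by rw [hD2def]; simp [cyc]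
      rw [hdisjD] at this
      simp at this
    have hCD : ∀ A ∈ ({C1, C2} : Finset (Finset (Sym2 V))), A ≠ D1 ∧ A ≠ D2 := by
      intro A hA
      simp only [Finset.mem_insert, Finset.mem_singleton] at hA
      rcases hA with rfl|rfl
      · constructor
        · intro h
          have : s(w,p) ∈ A := by rw [h, hD1def]; simp [cyc]
          rw [hC1'] at this
          simp only [cyc, mem_insert, mem_singleton, Sym2.eq_iff] at this
          tauto
        · intro h
          have : s(w,q) ∈ A := by rw [h, hD2def]; simp [cyc]
          rw [hC1'] at this
          simp only [cyc, mem_insert, mem_singleton, Sym2.eq_iff] at this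
          tauto
      · constructor
        · intro h
          have : s(u,x) ∈ A := by rw [h, hD1def]; simp [cyc]
          rw [hC2'] at this
          simp only [cyc, mem_insert, mem_singleton, Sym2.eq_iff] at this
          tauto
        · intro h
          have : s(u,y) ∈ A := by rw [h, hD2def]; simp [cyc]
          rw [hC2'] at this
          simp only [cyc, mem_insert, mem_singleton, Sym2.eq_iff] at this
          tauto
    refine ⟨{D1, D2}, ⟨⟨?_, ?_⟩, ⟨?_, ?_⟩, ?_, ?_⟩, ?_⟩
    · intro E hE
      simp only [Finset.mem_insert, Finset.mem_singleton] at hE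
      rcases hE with rfl|rfl
      · exact ⟨a,b,c,d,g1,g2,g3,g4,g5,g6,hC1⟩
      · exact ⟨a',b',c',d',f1,f2,f3,f4,f5,f6,hC2⟩
    · intro A hA B hB hAB
      simp only [Finset.coe_insert, Finset.coe_singleton, Set.mem_insert_iff,
        Set.mem_singleton_iff] at hA hB
      rcases hA with rfl|rfl <;> rcases hB with rfl|rfl
      · exact absurd rfl hAB
      · exact hdisj
      · exact hdisj.symm
      · exact absurd rfl hAB
    · intro E hE
      simp only [Finset.mem_insert, Finset.mem_singleton] at hE
      rcases hE with rfl|rfl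
      exacts [hD1c, hD2c]
    · intro A hA B hB hAB
      simp only [Finset.coe_insert, Finset.coe_singleton, Set.mem_insert_iff,
        Set.mem_singleton_iff] at hA hB
      rcases hA with rfl|rfl <;> rcases hB with rfl|rfl
      · exact absurd rfl hAB
      · exact hdisjD
      · exact hdisjD.symm
      · exact absurd rfl hAB
    · rw [Finset.disjoint_left]
      intro A hA hA2
      simp only [Finset.mem_insert, Finset.mem_singleton] at hA2
      obtain ⟨n1, n2⟩ := hCD A hA
      rcases hA2 with h|h
      exacts [n1 h, n2 h]
    · rw [edgesOf_pair, edgesOf_pair, hC1', hC2', hD1def, hD2def]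
      ext e
      simp only [Finset.mem_union, cyc, mem_insert, mem_singleton]
      constructor
      · rintro ((rfl|rfl|rfl|rfl)|(rfl|rfl|rfl|rfl))
        · exact Or.inl (Or.inl rfl)
        · exact Or.inl (Or.inr (Or.inl rfl))
        · exact Or.inr (Or.inr (Or.inl Sym2.eq_swap))
        · exact Or.inr (Or.inl Sym2.eq_swap)
        · exact Or.inl (Or.inr (Or.inr (Or.inr Sym2.eq_swap)))
        · exact Or.inl (Or.inr (Or.inr (Or.inl Sym2.eq_swap)))
        · exact Or.inr (Or.inr (Or.inr (Or.inl rfl)))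
        · exact Or.inr (Or.inr (Or.inr (Or.inr rfl)))
      · rintro ((rfl|rfl|rfl|rfl)|(rfl|rfl|rfl|rfl))
        · exact Or.inl (Or.inl rfl)
        · exact Or.inl (Or.inr (Or.inl rfl))
        · exact Or.inr (Or.inr (Or.inl Sym2.eq_swap))
        · exact Or.inr (Or.inl Sym2.eq_swap)
        · exact Or.inl (Or.inr (Or.inr (Or.inr Sym2.eq_swap)))
        · exact Or.inl (Or.inr (Or.inr (Or.inl Sym2.eq_swap)))
        · exact Or.inr (Or.inr (Or.inr (Or.inl rfl)))
        · exact Or.inr (Or.inr (Or.inr (Or.inr rfl)))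
    · exact Finset.card_pair hD12
end

section
/- Up to isomorphism, there is exactly one 4-cycle bitrade of volume 3 and foundation 6, and the graph of any such bitrade is K_6 minus a perfect matching. -/
open Finset

/-- Action of a permutation of the vertices on a family of cycles. -/
def actP (σ : Equiv.Perm ℕ) (T : Finset (Finset (Sym2 ℕ))) : Finset (Finset (Sym2 ℕ)) :=
  T.image (fun E => E.image (Sym2.map ⇑σ))

/-- A 4-cycle bitrade of volume 3 and foundation 6. -/
def IsTrade36 (T1 T2 : Finset (Finset (Sym2 ℕ))) : Prop :=
  IsBitrade T1 T2 ∧ T1.card = 3 ∧ T2.card = 3 ∧ foundation T1 = 6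

/-- `F` is a perfect matching on the vertex set `W`. -/
def PerfMatchingOn (W : Finset ℕ) (F : Finset (Sym2 ℕ)) : Prop :=
  (∀ e ∈ F, ¬ e.IsDiag ∧ ∀ v ∈ e, v ∈ W) ∧
  ((F : Set (Sym2 ℕ)).Pairwise fun e f => ∀ v, v ∈ e → v ∉ f) ∧
  ∀ v ∈ W, ∃ e ∈ F, v ∈ e

def Oct : Finset (Sym2 ℕ) := {s(0,2), s(0,3), s(0,4), s(0,5), s(1,2), s(1,3), s(1,4), s(1,5), s(2,4), s(2,5), s(3,4), s(3,5)}

def L : Finset (Finset (Sym2 ℕ)) := {{s(0,2), s(0,3), s(1,2), s(1,3)}, {s(0,2), s(0,3), s(2,4), s(3,4)}, {s(0,2), s(0,3), s(2,5), s(3,5)}, {s(0,2), s(0,4), s(1,2), s(1,4)}, {s(0,2), s(0,5), s(1,2), s(1,5)}, {s(0,3), s(0,4), s(1,3), s(1,4)}, {s(0,3), s(0,5), s(1,3), s(1,5)}, {s(0,4), s(0,5), s(1,4), s(1,5)}, {s(0,4), s(0,5), s(2,4), s(2,5)}, {s(0,4), s(0,5), s(3,4), s(3,5)}, {s(1,2),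 s(1,3), s(2,4), s(3,4)}, {s(1,2), s(1,3), s(2,5), s(3,5)}, {s(1,4), s(1,5), s(2,4), s(2,5)}, {s(1,4), s(1,5), s(3,4), s(3,5)}, {s(2,4), s(2,5), s(3,4), s(3,5)}}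

def Ds : Finset (Finset (Finset (Sym2 ℕ))) := {{{s(0,2), s(0,3), s(1,2), s(1,3)}, {s(0,4), s(0,5), s(1,4), s(1,5)}, {s(2,4), s(2,5), s(3,4), s(3,5)}}, {{s(0,2), s(0,3), s(1,2), s(1,3)}, {s(0,4), s(0,5), s(2,4), s(2,5)}, {s(1,4), s(1,5), s(3,4), s(3,5)}}, {{s(0,2), s(0,3), s(1,2), s(1,3)}, {s(0,4), s(0,5), s(3,4), s(3,5)}, {s(1,4), s(1,5), s(2,4), s(2,5)}}, {{s(0,2), s(0,3), s(2,4), s(3,4)}, {s(0,4), s(0,5), s(1,4), s(1,5)}, {s(1,2), s(1,3), s(2,5), s(3,5)}}, {{s(0,2), s(0,3), s(2,5), s(3,5)}, {s(0,4), s(0,5), s(1,4), s(1,5)}, {s(1,2), s(1,3), s(2,4), s(3,4)}}, {{s(0,2), s(0,4), s(1,2), s(1,4)}, {s(0,3), s(0,5), s(1,3), s(1,5)}, {s(2,4), s(2,5), s(3,4), s(3,5)}}, {{s(0,2), s(0,5), s(1,2), s(1,5)}, {s(0,3), s(0,4), s(1,3), s(1,4)}, {s(2,4), s(2,5), s(3,4),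 s(3,5)}}}

def C1 : Finset (Finset (Sym2 ℕ)) := {{s(0,2), s(0,3), s(1,2), s(1,3)}, {s(0,4), s(0,5), s(2,4), s(2,5)}, {s(1,4), s(1,5), s(3,4), s(3,5)}}

def C2 : Finset (Finset (Sym2 ℕ)) := {{s(0,2), s(0,3), s(2,4), s(3,4)}, {s(0,4), s(0,5), s(1,4), s(1,5)}, {s(1,2), s(1,3), s(2,5), s(3,5)}}

def PermList : List (Equiv.Perm ℕ) := [(1 : Equiv.Perm ℕ), (Equiv.swap 4 5 : Equiv.Perm ℕ), (Equiv.swap 0 2 : Equiv.Perm ℕ)*(Equiv.swap 1 3 : Equiv.Perm ℕ), (Equiv.swap 0 2 : Equiv.Perm ℕ)*(Equiv.swap 1 3 : Equiv.Perm ℕ)*(Equiv.swap 4 5 : Equiv.Perm ℕ), (Equiv.swap 2 3 : Equiv.Perm ℕ), (Equiv.swap 2 3 : Equiv.Perm ℕ)*(Equiv.swap 4 5 : Equiv.Perm ℕ), (Equiv.swap 0 3 : Equiv.Perm ℕ)*(Equiv.swap 0 1 : Equiv.Perm ℕ)*(Equiv.swap 0 2 : Equiv.Perm ℕ)*(Equiv.swap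 4 5 : Equiv.Perm ℕ), (Equiv.swap 0 3 : Equiv.Perm ℕ)*(Equiv.swap 0 1 : Equiv.Perm ℕ)*(Equiv.swap 0 2 : Equiv.Perm ℕ), (Equiv.swap 2 4 : Equiv.Perm ℕ)*(Equiv.swap 3 5 : Equiv.Perm ℕ), (Equiv.swap 2 4 : Equiv.Perm ℕ)*(Equiv.swap 2 3 : Equiv.Perm ℕ)*(Equiv.swap 2 5 : Equiv.Perm ℕ), (Equiv.swap 0 4 : Equiv.Perm ℕ)*(Equiv.swap 0 2 : Equiv.Perm ℕ)*(Equiv.swap 1 5 : Equiv.Perm ℕ)*(Equiv.swap 1 3 : Equiv.Perm ℕ), (Equiv.swap 0 4 : Equiv.Perm ℕ)*(Equiv.swap 0 3 : Equiv.Perm ℕ)*(Equiv.swap 0 1 : Equiv.Perm ℕ)*(Equiv.swap 0 5 : Equiv.Perm ℕ)*(Equiv.swap 0 2 : Equiv.Perm ℕ), (Equiv.swap 2 5 : Equiv.Perm ℕ)*(Equiv.swap 2 3 : Equiv.Perm ℕ)*(Equiv.swap 2 4 : Equiv.Perm ℕ), (Equiv.swap 2 5 : Equiv.Perm ℕ)*(Equiv.swap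 3 4 : Equiv.Perm ℕ), (Equiv.swap 0 5 : Equiv.Perm ℕ)*(Equiv.swap 0 2 : Equiv.Perm ℕ)*(Equiv.swap 1 4 : Equiv.Perm ℕ)*(Equiv.swap 1 3 : Equiv.Perm ℕ), (Equiv.swap 0 5 : Equiv.Perm ℕ)*(Equiv.swap 0 3 : Equiv.Perm ℕ)*(Equiv.swap 0 1 : Equiv.Perm ℕ)*(Equiv.swap 0 4 : Equiv.Perm ℕ)*(Equiv.swap 0 2 : Equiv.Perm ℕ), (Equiv.swap 0 2 : Equiv.Perm ℕ)*(Equiv.swap 0 4 : Equiv.Perm ℕ)*(Equiv.swap 1 3 : Equiv.Perm ℕ)*(Equiv.swap 1 5 : Equiv.Perm ℕ), (Equiv.swap 0 3 : Equiv.Perm ℕ)*(Equiv.swap 0 4 : Equiv.Perm ℕ)*(Equiv.swap 1 2 : Equiv.Perm ℕ)*(Equiv.swap 1 5 : Equiv.Perm ℕ), (Equiv.swap 0 4 : Equiv.Perm ℕ)*(Equiv.swap 1 5 : Equiv.Perm ℕ), (Equiv.swap 0 5 : Equiv.Perm ℕ)*(Equiv.swap 0 1 : Equiv.Perm ℕ)*(Equiv.swap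 0 4 : Equiv.Perm ℕ)*(Equiv.swap 2 3 : Equiv.Perm ℕ), (Equiv.swap 0 2 : Equiv.Perm ℕ)*(Equiv.swap 0 5 : Equiv.Perm ℕ)*(Equiv.swap 0 1 : Equiv.Perm ℕ)*(Equiv.swap 0 3 : Equiv.Perm ℕ)*(Equiv.swap 0 4 : Equiv.Perm ℕ), (Equiv.swap 0 3 : Equiv.Perm ℕ)*(Equiv.swap 0 5 : Equiv.Perm ℕ)*(Equiv.swap 0 1 : Equiv.Perm ℕ)*(Equiv.swap 0 2 : Equiv.Perm ℕ)*(Equiv.swap 0 4 : Equiv.Perm ℕ), (Equiv.swap 0 4 : Equiv.Perm ℕ)*(Equiv.swap 1 5 : Equiv.Perm ℕ)*(Equiv.swap 2 3 : Equiv.Perm ℕ), (Equiv.swap 0 5 : Equiv.Perm ℕ)*(Equiv.swap 0 1 : Equiv.Perm ℕ)*(Equiv.swap 0 4 : Equiv.Perm ℕ)]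

def PermList2 : List (Equiv.Perm ℕ) := [(1 : Equiv.Perm ℕ), (Equiv.swap 3 4 : Equiv.Perm ℕ), (Equiv.swap 3 5 : Equiv.Perm ℕ)*(Equiv.swap 3 4 : Equiv.Perm ℕ), (Equiv.swap 1 2 : Equiv.Perm ℕ), (Equiv.swap 1 2 : Equiv.Perm ℕ)*(Equiv.swap 3 4 : Equiv.Perm ℕ), (Equiv.swap 1 2 : Equiv.Perm ℕ)*(Equiv.swap 3 5 : Equiv.Perm ℕ)*(Equiv.swap 3 4 : Equiv.Perm ℕ), (Equiv.swap 1 3 : Equiv.Perm ℕ)*(Equiv.swap 1 2 : Equiv.Perm ℕ), (Equiv.swap 1 3 : Equiv.Perm ℕ)*(Equiv.swap 1 4 : Equiv.Perm ℕ)*(Equiv.swap 1 2 : Equiv.Perm ℕ), (Equiv.swap 1 3 : Equiv.Perm ℕ)*(Equiv.swap 1 5 : Equiv.Perm ℕ)*(Equiv.swap 1 4 : Equiv.Perm ℕ)*(Equiv.swap 1 2 : Equiv.Perm ℕ), (Equiv.swap 1 4 : Equiv.Perm ℕ)*(Equiv.swap 1 3 : Equiv.Perm ℕ)*(Equiv.swap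 1 2 : Equiv.Perm ℕ), (Equiv.swap 1 4 : Equiv.Perm ℕ)*(Equiv.swap 1 2 : Equiv.Perm ℕ), (Equiv.swap 1 4 : Equiv.Perm ℕ)*(Equiv.swap 1 2 : Equiv.Perm ℕ)*(Equiv.swap 3 5 : Equiv.Perm ℕ), (Equiv.swap 1 5 : Equiv.Perm ℕ)*(Equiv.swap 1 4 : Equiv.Perm ℕ)*(Equiv.swap 1 3 : Equiv.Perm ℕ)*(Equiv.swap 1 2 : Equiv.Perm ℕ), (Equiv.swap 1 5 : Equiv.Perm ℕ)*(Equiv.swap 1 4 : Equiv.Perm ℕ)*(Equiv.swap 1 2 : Equiv.Perm ℕ), (Equiv.swap 1 5 : Equiv.Perm ℕ)*(Equiv.swap 1 3 : Equiv.Perm ℕ)*(Equiv.swap 1 4 : Equiv.Perm ℕ)*(Equiv.swap 1 2 : Equiv.Perm ℕ)]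


def K6' : Finset (Sym2 ℕ) := (Finset.range 6).sym2.filter (fun e => ¬ e.IsDiag)

def M0 : Finset (Sym2 ℕ) := {s(0,1), s(2,3), s(4,5)}

set_option maxRecDepth 20000 in
theorem DsChar : ∀ T ∈ L.powersetCard 3, edgesOf T = Oct → T ∈ Ds := by decide

set_option maxRecDepth 20000 in
theorem cycMemL : ∀ a ∈ Finset.range 6, ∀ b ∈ Finset.range 6, ∀ c ∈ Finset.range 6, ∀ d ∈ Finset.range 6,
    a ≠ b → a ≠ c → a ≠ d → b ≠ c → b ≠ d → c ≠ d → cyc a b c d ⊆ Oct → cyc a b c d ∈ L := by decide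

set_option maxRecDepth 20000 in
theorem classify : ∀ S1 ∈ Ds, ∀ S2 ∈ Ds, Disjoint S1 S2 →
    ∃ σ ∈ PermList, actP σ S1 = C1 ∧ actP σ S2 = C2 := by decide

set_option maxRecDepth 20000 in
theorem matchClassify : ∀ F ∈ K6'.powersetCard 3,
    (∀ e ∈ F, ∀ f ∈ F, e ≠ f → ∀ v ∈ Finset.range 6, v ∈ e → v ∉ f) →
    ∃ σ ∈ PermList2, F.image (Sym2.map ⇑σ) = M0 ∧ (Finset.range 6).image ⇑σ = Finset.range 6 := by decide

set_option maxRecDepth 20000 in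
theorem octEq : Oct = K6' \ M0 := by decide

theorem memOctBound : ∀ {a b : ℕ}, s(a,b) ∈ Oct → a ∈ Finset.range 6 ∧ b ∈ Finset.range 6 := by
  intro a b h
  simp only [Oct, Finset.mem_insert, Finset.mem_singleton, Sym2.eq_iff] at h
  simp only [Finset.mem_range]
  omega

----------------------------------------------------------------
-- Generic helpers
----------------------------------------------------------------

lemma sym2_cases (e : Sym2 ℕ) : ∃ x y : ℕ, e = s(x, y) := by
  induction e using Sym2.ind with
  | _ x y => exact ⟨x, y, rfl⟩

def vset : Sym2 ℕ → Finset ℕ :=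
  Sym2.lift ⟨fun a b => {a, b}, fun a b => by simp [Finset.pair_comm]⟩

@[simp] lemma mem_vset {v : ℕ} {e : Sym2 ℕ} : v ∈ vset e ↔ v ∈ e := by
  induction e using Sym2.ind with
  | _ x y => simp [vset, Sym2.mem_iff]

def suppF (T : Finset (Finset (Sym2 ℕ))) : Finset ℕ := T.biUnion fun E => E.biUnion vset

lemma foundation_eq (T : Finset (Finset (Sym2 ℕ))) : foundation T = (suppF T).card := by
  have h : {v : ℕ | ∃ E ∈ T, ∃ e ∈ E, v ∈ e} = ↑(suppF T) := by
    ext v; simp [suppF]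
  rw [foundation, h, Set.ncard_coe_finset]

lemma sym2_map_inj (σ : Equiv.Perm ℕ) : Function.Injective (Sym2.map ⇑σ) :=
  Sym2.map.injective σ.injective

lemma famMap_inj (σ : Equiv.Perm ℕ) :
    Function.Injective (fun E : Finset (Sym2 ℕ) => E.image (Sym2.map ⇑σ)) :=
  Finset.image_injective (sym2_map_inj σ)

lemma actP_mul (σ τ : Equiv.Perm ℕ) (T : Finset (Finset (Sym2 ℕ))) :
    actP (σ * τ) T = actP σ (actP τ T) := by
  unfold actP
  rw [Finset.image_image]
  refine Finset.image_congr fun E _ => ?_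
  simp only [Function.comp_apply, Finset.image_image]
  refine Finset.image_congr fun e _ => ?_
  simp [Sym2.map_map]

lemma actP_one (T : Finset (Finset (Sym2 ℕ))) : actP 1 T = T := by
  unfold actP
  have : (fun E : Finset (Sym2 ℕ) => E.image (Sym2.map ⇑(1 : Equiv.Perm ℕ))) = id := by
    funext E
    simp only [Equiv.Perm.coe_one, id]
    rw [Sym2.map_id, Finset.image_id]
  rw [this, Finset.image_id]

lemma actP_inv_cancel {σ : Equiv.Perm ℕ} {T S : Finset (Finset (Sym2 ℕ))}
    (h : actP σ T = S) : actP σ⁻¹ S = T := by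
  rw [← h, ← actP_mul, inv_mul_cancel, actP_one]

lemma edgesOf_actP (σ : Equiv.Perm ℕ) (T : Finset (Finset (Sym2 ℕ))) :
    edgesOf (actP σ T) = (edgesOf T).image (Sym2.map ⇑σ) := by
  unfold edgesOf actP
  rw [Finset.biUnion_image]
  rw [Finset.image_biUnion]
  rfl

lemma image_cyc (f : ℕ → ℕ) (a b c d : ℕ) :
    (cyc a b c d).image (Sym2.map f) = cyc (f a) (f b) (f c) (f d) := by
  simp [cyc, Finset.image_insert, Sym2.map_pair_eq]

def KW (W : Finset ℕ) : Finset (Sym2 ℕ) := W.sym2.filter fun e => ¬ e.IsDiag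

lemma image_KW (σ : Equiv.Perm ℕ) (W : Finset ℕ) :
    (KW W).image (Sym2.map ⇑σ) = KW (W.image ⇑σ) := by
  unfold KW
  rw [Finset.sym2_image, Finset.filter_image]
  congr 1
  refine Finset.filter_congr fun e _ => ?_
  simp [Sym2.isDiag_map σ.injective]

lemma card_cyc {a b c d : ℕ} (h1 : a≠b) (h2 : a≠c) (h3 : a≠d) (h4 : b≠c) (h5 : b≠d) (h6 : c≠d) :
    (cyc a b c d).card = 4 := by
  rw [cyc, Finset.card_insert_of_notMem (by simp [Sym2.eq_iff]; omega),
    Finset.card_insert_of_notMem (by simp [Sym2.eq_iff]; omega),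
    Finset.card_insert_of_notMem (by simp [Sym2.eq_iff]; omega), Finset.card_singleton]

lemma filter_cyc {a b c d : ℕ} (v : ℕ)
    (h1 : a≠b) (h2 : a≠c) (h3 : a≠d) (h4 : b≠c) (h5 : b≠d) (h6 : c≠d) :
    ((cyc a b c d).filter fun e => v ∈ e).card
      = if v = a ∨ v = b ∨ v = c ∨ v = d then 2 else 0 := by
  rw [Finset.card_filter, cyc,
    Finset.sum_insert (by simp [Sym2.eq_iff]; omega),
    Finset.sum_insert (by simp [Sym2.eq_iff]; omega),
    Finset.sum_insert (by simp [Sym2.eq_iff]; omega), Finset.sum_singleton]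
  by_cases ha : v = a <;> by_cases hb : v = b <;> by_cases hc : v = c <;> by_cases hd : v = d <;>
    simp_all [Sym2.mem_iff] <;> omega

lemma handshake (W : Finset ℕ) (E : Finset (Sym2 ℕ)) (hE : E ⊆ KW W) :
    ∑ v ∈ W, (E.filter fun e => v ∈ e).card = 2 * E.card := by
  have key : ∀ e ∈ E, (W.filter fun v => v ∈ e).card = 2 := by
    intro e
    induction e using Sym2.ind with
    | _ x y =>
      intro he
      have hmem := hE he
      rw [KW, Finset.mem_filter, Finset.mem_sym2_iff] at hmem
      obtain ⟨hin, hnd⟩ := hmem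
      have hxy : x ≠ y := by simpa [Sym2.mk_isDiag_iff] using hnd
      have hfe : W.filter (fun v => v ∈ s(x,y)) = {x, y} := by
        ext v
        simp only [Finset.mem_filter, Sym2.mem_iff, Finset.mem_insert, Finset.mem_singleton]
        constructor
        · tauto
        · rintro (rfl | rfl)
          · exact ⟨hin _ (by simp), Or.inl rfl⟩
          · exact ⟨hin _ (by simp), Or.inr rfl⟩
      rw [hfe, Finset.card_pair hxy]
  calc ∑ v ∈ W, (E.filter fun e => v ∈ e).card
      = ∑ v ∈ W, ∑ e ∈ E, if v ∈ e then 1 else 0 := by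
        exact Finset.sum_congr rfl fun v _ => Finset.card_filter _ _
    _ = ∑ e ∈ E, ∑ v ∈ W, if v ∈ e then 1 else 0 := Finset.sum_comm
    _ = ∑ e ∈ E, (W.filter fun v => v ∈ e).card := by
        exact Finset.sum_congr rfl fun e _ => (Finset.card_filter _ _).symm
    _ = ∑ e ∈ E, 2 := Finset.sum_congr rfl key
    _ = 2 * E.card := by rw [Finset.sum_const, smul_eq_mul, mul_comm]

----------------------------------------------------------------
-- Structure lemma
----------------------------------------------------------------

lemma struct {T1 T2 : Finset (Finset (Sym2 ℕ))} (h : IsTrade36 T1 T2) :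
    ∃ W F : _, W.card = 6 ∧ PerfMatchingOn W F ∧ edgesOf T1 = KW W \ F ∧
      F ⊆ KW W ∧ F.card = 3 := by
  obtain ⟨⟨⟨hcy1, hdj1⟩, _, _, _⟩, hc1, _, hf⟩ := h
  set W := suppF T1 with hW
  have h6 : W.card = 6 := by rw [← foundation_eq]; exact hf
  set Ed := edgesOf T1 with hEd
  -- edges lie in KW W
  have hsub : Ed ⊆ KW W := by
    intro e he
    rw [hEd, edgesOf, Finset.mem_biUnion] at he
    obtain ⟨E, hE, heE⟩ := he
    simp only [id] at heE
    rw [KW, Finset.mem_filter, Finset.mem_sym2_iff]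
    constructor
    · intro v hv
      exact Finset.mem_biUnion.mpr ⟨E, hE, Finset.mem_biUnion.mpr ⟨e, heE, mem_vset.mpr hv⟩⟩
    · obtain ⟨a, b, c, d, d1, d2, d3, d4, d5, d6, rfl⟩ := hcy1 E hE
      simp only [cyc, Finset.mem_insert, Finset.mem_singleton] at heE
      rcases heE with rfl | rfl | rfl | rfl <;> rw [Sym2.mk_isDiag_iff] <;> omega
  -- number of edges
  have hdisj' : ∀ E ∈ T1, ∀ E' ∈ T1, E ≠ E' → Disjoint (id E) (id E') := by
    intro E hE E' hE' hne
    exact hdj1 (Finset.mem_coe.mpr hE) (Finset.mem_coe.mpr hE') hne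
  have hcard12 : Ed.card = 12 := by
    rw [hEd, edgesOf, Finset.card_biUnion hdisj']
    have : ∀ E ∈ T1, (id E).card = 4 := by
      intro E hE
      obtain ⟨a, b, c, d, d1, d2, d3, d4, d5, d6, rfl⟩ := hcy1 E hE
      exact card_cyc d1 d2 d3 d4 d5 d6
    rw [Finset.sum_congr rfl this, Finset.sum_const, hc1]
    simp [smul_eq_mul]
  -- degrees are even
  have hdeg_even : ∀ v : ℕ, 2 ∣ (Ed.filter fun e => v ∈ e).card := by
    intro v
    rw [hEd, edgesOf, Finset.filter_biUnion]
    rw [Finset.card_biUnion (fun E hE E' hE' hne =>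
      Finset.disjoint_filter_filter (hdisj' E hE E' hE' hne))]
    refine Finset.dvd_sum fun E hE => ?_
    obtain ⟨a, b, c, d, d1, d2, d3, d4, d5, d6, rfl⟩ := hcy1 E hE
    rw [id, filter_cyc v d1 d2 d3 d4 d5 d6]
    split <;> norm_num
  -- degree in KW W is 5
  have hdegK : ∀ v ∈ W, ((KW W).filter fun e => v ∈ e).card = 5 := by
    intro v hv
    have himg : (KW W).filter (fun e => v ∈ e) = (W.erase v).image fun w => s(v, w) := by
      ext e
      obtain ⟨x, y, rfl⟩ := sym2_cases e
      simp only [Finset.mem_filter, Finset.mem_image, Finset.mem_erase, KW,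
        Finset.mem_sym2_iff, Sym2.mem_iff, Sym2.mk_isDiag_iff]
      constructor
      · rintro ⟨⟨hall, hnd⟩, rfl | rfl⟩
        · exact ⟨y, ⟨fun hy => hnd hy.symm, hall y (by simp)⟩, rfl⟩
        · exact ⟨x, ⟨fun hx => hnd hx, hall x (by simp)⟩, Sym2.eq_swap⟩
      · rintro ⟨w, ⟨hwv, hwW⟩, hs⟩
        rw [Sym2.eq_iff] at hs
        constructor
        · constructor
          · intro z hz
            rcases hz with rfl | rfl <;> rcases hs with ⟨rfl, rfl⟩ | ⟨rfl, rfl⟩ <;>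
              first | exact hv | exact hwW
          · rcases hs with ⟨rfl, rfl⟩ | ⟨rfl, rfl⟩
            · exact fun hh => hwv hh.symm
            · exact fun hh => hwv hh
        · rcases hs with ⟨rfl, rfl⟩ | ⟨rfl, rfl⟩
          · exact Or.inl rfl
          · exact Or.inr rfl
    rw [himg, Finset.card_image_of_injOn, Finset.card_erase_of_mem hv, h6]
    intro w1 hw1 w2 hw2 heq
    rw [Sym2.eq_iff] at heq
    rcases heq with ⟨-, h⟩ | ⟨h1', h2'⟩
    · exact h
    · exact absurd h1'.symm (Finset.mem_erase.mp hw2).1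
  -- the complement F
  set F := KW W \ Ed with hFdef
  have hFsub : F ⊆ KW W := Finset.sdiff_subset
  have hunion : Ed ∪ F = KW W := by
    apply Finset.Subset.antisymm
    · exact Finset.union_subset hsub hFsub
    · intro e he
      by_cases hh : e ∈ Ed
      · exact Finset.mem_union_left _ hh
      · exact Finset.mem_union_right _ (Finset.mem_sdiff.mpr ⟨he, hh⟩)
  have hpart : ∀ v : ℕ, (Ed.filter fun e => v ∈ e).card + (F.filter fun e => v ∈ e).card
      = ((KW W).filter fun e => v ∈ e).card := by
    intro v
    rw [← hunion, Finset.filter_union, Finset.card_union_of_disjoint]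
    exact Finset.disjoint_filter_filter Finset.disjoint_sdiff
  have hsum_d : ∑ v ∈ W, (Ed.filter fun e => v ∈ e).card = 24 := by
    rw [handshake W Ed hsub, hcard12]
  have hsum_dF : ∑ v ∈ W, (F.filter fun e => v ∈ e).card = 6 := by
    have h30 : ∑ v ∈ W, (((Ed.filter fun e => v ∈ e).card) + ((F.filter fun e => v ∈ e).card))
        = 30 := by
      rw [Finset.sum_congr rfl fun v hv => (hpart v).trans (hdegK v hv),
        Finset.sum_const, h6]
      simp [smul_eq_mul]
    rw [Finset.sum_add_distrib, hsum_d] at h30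
    omega
  have hF3 : F.card = 3 := by
    have := handshake W F hFsub
    omega
  have hdF_odd : ∀ v ∈ W, (F.filter fun e => v ∈ e).card % 2 = 1 := by
    intro v hv
    have h5' := (hpart v).trans (hdegK v hv)
    have := hdeg_even v
    omega
  have hdF1 : ∀ v ∈ W, (F.filter fun e => v ∈ e).card = 1 := by
    by_contra hcon
    push_neg at hcon
    obtain ⟨v, hv, hne⟩ := hcon
    have hlt : ∑ v ∈ W, 1 < ∑ v ∈ W, (F.filter fun e => v ∈ e).card := by
      refine Finset.sum_lt_sum (fun i hi => ?_) ⟨v, hv, ?_⟩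
      · have := hdF_odd i hi; omega
      · have := hdF_odd v hv; omega
    rw [Finset.sum_const, h6, hsum_dF, smul_eq_mul] at hlt
    omega
  -- the perfect matching
  have hFK : ∀ e ∈ F, ¬ e.IsDiag ∧ ∀ v ∈ e, v ∈ W := by
    intro e he
    have := hFsub he
    rw [KW, Finset.mem_filter, Finset.mem_sym2_iff] at this
    exact ⟨this.2, this.1⟩
  refine ⟨W, F, h6, ⟨hFK, ?_, ?_⟩, ?_, hFsub, hF3⟩
  · intro e he f hf hef v hve hvf
    rw [Finset.mem_coe] at he hf
    have hvW : v ∈ W := (hFK e he).2 v hve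
    have hss : ({e, f} : Finset (Sym2 ℕ)) ⊆ F.filter fun x => v ∈ x := by
      intro x hx
      rcases Finset.mem_insert.mp hx with rfl | hx
      · exact Finset.mem_filter.mpr ⟨he, hve⟩
      · rw [Finset.mem_singleton] at hx
        subst hx
        exact Finset.mem_filter.mpr ⟨hf, hvf⟩
    have := Finset.card_le_card hss
    rw [Finset.card_pair hef, hdF1 v hvW] at this
    omega
  · intro v hv
    have : 0 < (F.filter fun e => v ∈ e).card := by rw [hdF1 v hv]; omega
    obtain ⟨e, he⟩ := Finset.card_pos.mp this
    rw [Finset.mem_filter] at he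
    exact ⟨e, he.1, he.2⟩
  · rw [hFdef]
    exact (Finset.sdiff_sdiff_eq_self hsub).symm

----------------------------------------------------------------
-- Extending a bijection to a permutation of ℕ
----------------------------------------------------------------

lemma exists_perm_on (W : Finset ℕ) (h6 : W.card = 6) :
    ∃ σ : Equiv.Perm ℕ, W.image ⇑σ = Finset.range 6 := by
  classical
  have hcard : Fintype.card ↥W = Fintype.card ↥(Finset.range 6) := by
    simp [Fintype.card_coe, h6]
  let e0 : ↥W ≃ ↥(Finset.range 6) := Fintype.equivOfCardEq hcard
  haveI : Infinite ((↑W : Set ℕ)ᶜ : Set ℕ) :=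
    Set.infinite_coe_iff.mpr (W.finite_toSet.infinite_compl)
  haveI : Infinite ((↑(Finset.range 6) : Set ℕ)ᶜ : Set ℕ) :=
    Set.infinite_coe_iff.mpr ((Finset.range 6).finite_toSet.infinite_compl)
  obtain ⟨d1⟩ := nonempty_denumerable ((↑W : Set ℕ)ᶜ : Set ℕ)
  obtain ⟨d2⟩ := nonempty_denumerable ((↑(Finset.range 6) : Set ℕ)ᶜ : Set ℕ)
  let e1 : ((↑W : Set ℕ)ᶜ : Set ℕ) ≃ ((↑(Finset.range 6) : Set ℕ)ᶜ : Set ℕ) :=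
    (@Denumerable.eqv _ d1).trans (@Denumerable.eqv _ d2).symm
  let e0' : ((↑W : Set ℕ)) ≃ ((↑(Finset.range 6) : Set ℕ)) := e0
  let E := (Equiv.Set.compl e0').symm e1
  refine ⟨E.1, ?_⟩
  have hEprop : ∀ x : (↑W : Set ℕ), E.1 x = e0' x := E.2
  have hsubset : W.image ⇑E.1 ⊆ Finset.range 6 := by
    intro x hx
    rw [Finset.mem_image] at hx
    obtain ⟨a, ha, rfl⟩ := hx
    rw [hEprop ⟨a, ha⟩]
    exact (e0 ⟨a, ha⟩).2
  apply Finset.eq_of_subset_of_card_le hsubset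
  rw [Finset.card_image_of_injective _ E.1.injective, h6, Finset.card_range]

----------------------------------------------------------------
-- Normalization
----------------------------------------------------------------

lemma edges_subset_edgesOf {T : Finset (Finset (Sym2 ℕ))} {E : Finset (Sym2 ℕ)}
    (hE : E ∈ T) : E ⊆ edgesOf T := by
  intro e he
  exact Finset.mem_biUnion.mpr ⟨E, hE, he⟩


lemma mem_cyc1 (a b c d : ℕ) : s(a,b) ∈ cyc a b c d := by simp [cyc]
lemma mem_cyc3 (a b c d : ℕ) : s(c,d) ∈ cyc a b c d := by simp [cyc]

lemma mem_Ds_of {T : Finset (Finset (Sym2 ℕ))} (hc : T.card = 3)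
    (hcy : ∀ E ∈ T, IsCycle4 E) (he : edgesOf T = Oct) : T ∈ Ds := by
  refine DsChar T (Finset.mem_powersetCard.mpr ⟨?_, hc⟩) he
  intro E hE
  obtain ⟨a, b, c, d, d1, d2, d3, d4, d5, d6, rfl⟩ := hcy E hE
  have hsubOct : cyc a b c d ⊆ Oct := he ▸ edges_subset_edgesOf hE
  have hab := memOctBound (hsubOct (mem_cyc1 a b c d))
  have hcd := memOctBound (hsubOct (mem_cyc3 a b c d))
  exact cycMemL a hab.1 b hab.2 c hcd.1 d hcd.2 d1 d2 d3 d4 d5 d6 hsubOct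

lemma actP_cycles {T : Finset (Finset (Sym2 ℕ))} (σ : Equiv.Perm ℕ)
    (h : ∀ E ∈ T, IsCycle4 E) : ∀ E ∈ actP σ T, IsCycle4 E := by
  intro E hE
  rw [actP, Finset.mem_image] at hE
  obtain ⟨E0, hE0, rfl⟩ := hE
  obtain ⟨a, b, c, d, d1, d2, d3, d4, d5, d6, rfl⟩ := h E0 hE0
  exact ⟨σ a, σ b, σ c, σ d, σ.injective.ne d1, σ.injective.ne d2, σ.injective.ne d3,
    σ.injective.ne d4, σ.injective.ne d5, σ.injective.ne d6, image_cyc ⇑σ a b c d⟩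

lemma actP_card (σ : Equiv.Perm ℕ) (T : Finset (Finset (Sym2 ℕ))) :
    (actP σ T).card = T.card :=
  Finset.card_image_of_injective _ (famMap_inj σ)

lemma toCanon {T1 T2 : Finset (Finset (Sym2 ℕ))} (h : IsTrade36 T1 T2) :
    ∃ ρ : Equiv.Perm ℕ, actP ρ T1 = C1 ∧ actP ρ T2 = C2 := by
  obtain ⟨W, F, h6, hPM, hedge, hFsub, hF3⟩ := struct h
  obtain ⟨⟨⟨hcy1, _⟩, ⟨hcy2, _⟩, hTdisj, hEdeq⟩, hc1, hc2, _⟩ := h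
  obtain ⟨σ1, hσ1⟩ := exists_perm_on W h6
  set F' := F.image (Sym2.map ⇑σ1) with hF'
  have hK6' : K6' = KW (Finset.range 6) := rfl
  have hedge1 : edgesOf (actP σ1 T1) = K6' \ F' := by
    rw [edgesOf_actP, hedge, Finset.image_sdiff _ _ (sym2_map_inj σ1), image_KW, hσ1, hK6']
  -- F' is a 3-edge vertex-disjoint subfamily of K6'
  have hF'mem : F' ∈ K6'.powersetCard 3 := by
    refine Finset.mem_powersetCard.mpr ⟨?_, by
      rw [hF', Finset.card_image_of_injective _ (sym2_map_inj σ1), hF3]⟩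
    rw [hF', hK6', ← hσ1, ← image_KW]
    exact Finset.image_subset_image hFsub
  have hF'pair : ∀ e ∈ F', ∀ f ∈ F', e ≠ f → ∀ v ∈ Finset.range 6, v ∈ e → v ∉ f := by
    rintro e' he' f' hf' hne v - hve hvf
    rw [hF', Finset.mem_image] at he' hf'
    obtain ⟨e, he, rfl⟩ := he'
    obtain ⟨f, hf, rfl⟩ := hf'
    have hef : e ≠ f := fun hh => hne (by rw [hh])
    rw [Sym2.mem_map] at hve hvf
    obtain ⟨x, hx, hx'⟩ := hve
    obtain ⟨y, hy, hy'⟩ := hvf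
    have : x = y := σ1.injective (hx'.trans hy'.symm)
    subst this
    exact hPM.2.1 (Finset.mem_coe.mpr he) (Finset.mem_coe.mpr hf) hef x hx hy
  obtain ⟨σ2, -, hσ2F, hσ2r⟩ := matchClassify F' hF'mem hF'pair
  have hOct1 : edgesOf (actP σ2 (actP σ1 T1)) = Oct := by
    rw [edgesOf_actP, hedge1, Finset.image_sdiff _ _ (sym2_map_inj σ2), hK6', image_KW,
      hσ2r, hσ2F, ← hK6', octEq]
  have hOct2 : edgesOf (actP σ2 (actP σ1 T2)) = Oct := by
    rw [edgesOf_actP, edgesOf_actP, ← hEdeq, ← edgesOf_actP, ← edgesOf_actP]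
    exact hOct1
  rw [← actP_mul] at hOct1 hOct2
  set τ := σ2 * σ1 with hτ
  have hDs1 : actP τ T1 ∈ Ds :=
    mem_Ds_of (by rw [actP_card, hc1]) (actP_cycles τ hcy1) hOct1
  have hDs2 : actP τ T2 ∈ Ds :=
    mem_Ds_of (by rw [actP_card, hc2]) (actP_cycles τ hcy2) hOct2
  have hdisj : Disjoint (actP τ T1) (actP τ T2) :=
    (Finset.disjoint_image (famMap_inj τ)).mpr hTdisj
  obtain ⟨π, -, hπ1, hπ2⟩ := classify (actP τ T1) hDs1 (actP τ T2) hDs2 hdisj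
  refine ⟨π * τ, ?_, ?_⟩ <;> rw [actP_mul]
  · exact hπ1
  · exact hπ2

----------------------------------------------------------------
-- Existence
----------------------------------------------------------------

lemma isCycle4_of_eq {E : Finset (Sym2 ℕ)} (a b c d : ℕ) (h1 : a ≠ b) (h2 : a ≠ c)
    (h3 : a ≠ d) (h4 : b ≠ c) (h5 : b ≠ d) (h6 : c ≠ d) (hE : E = cyc a b c d) :
    IsCycle4 E := ⟨a, b, c, d, h1, h2, h3, h4, h5, h6, hE⟩

lemma pairwise_coe_of_finset {T : Finset (Finset (Sym2 ℕ))}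
    (h : ∀ E ∈ T, ∀ F ∈ T, E ≠ F → Disjoint E F) :
    (T : Set (Finset (Sym2 ℕ))).Pairwise Disjoint := by
  intro x hx y hy hxy
  exact h x (Finset.mem_coe.mp hx) y (Finset.mem_coe.mp hy) hxy

lemma trade_C1_C2 : IsTrade36 C1 C2 := by
  refine ⟨⟨⟨?_, pairwise_coe_of_finset (by decide)⟩, ⟨?_, pairwise_coe_of_finset (by decide)⟩,
    by decide, by decide⟩, by decide, by decide, ?_⟩
  · intro E hE
    fin_cases hE
    · exact isCycle4_of_eq 0 2 1 3 (by norm_num) (by norm_num) (by norm_num) (by norm_num)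
        (by norm_num) (by norm_num) (by decide)
    · exact isCycle4_of_eq 0 4 2 5 (by norm_num) (by norm_num) (by norm_num) (by norm_num)
        (by norm_num) (by norm_num) (by decide)
    · exact isCycle4_of_eq 1 4 3 5 (by norm_num) (by norm_num) (by norm_num) (by norm_num)
        (by norm_num) (by norm_num) (by decide)
  · intro E hE
    fin_cases hE
    · exact isCycle4_of_eq 0 2 4 3 (by norm_num) (by norm_num) (by norm_num) (by norm_num)
        (by norm_num) (by norm_num) (by decide)
    · exact isCycle4_of_eq 0 4 1 5 (by norm_num) (by norm_num) (by norm_num) (by norm_num)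
        (by norm_num) (by norm_num) (by decide)
    · exact isCycle4_of_eq 1 2 5 3 (by norm_num) (by norm_num) (by norm_num) (by norm_num)
        (by norm_num) (by norm_num) (by decide)
  · rw [foundation_eq]
    decide

----------------------------------------------------------------
-- Main theorem
----------------------------------------------------------------

theorem unique_trade_volume3_foundation6 :
    (∃ T1 T2 : Finset (Finset (Sym2 ℕ)), IsTrade36 T1 T2) ∧
    (∀ T1 T2 T1' T2' : Finset (Finset (Sym2 ℕ)), IsTrade36 T1 T2 → IsTrade36 T1' T2' →
      ∃ σ : Equiv.Perm ℕ,
        (actP σ T1 = T1' ∧ actP σ T2 = T2') ∨ (actP σ T1 = T2' ∧ actP σ T2 = T1')) ∧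
    (∀ T1 T2 : Finset (Finset (Sym2 ℕ)), IsTrade36 T1 T2 →
      ∃ (W : Finset ℕ) (F : Finset (Sym2 ℕ)), W.card = 6 ∧ PerfMatchingOn W F ∧
        edgesOf T1 = (W.sym2.filter fun e => ¬ e.IsDiag) \ F) := by
  refine ⟨⟨C1, C2, trade_C1_C2⟩, ?_, ?_⟩
  · intro T1 T2 T1' T2' h h'
    obtain ⟨α, hα1, hα2⟩ := toCanon h
    obtain ⟨β, hβ1, hβ2⟩ := toCanon h'
    refine ⟨β⁻¹ * α, Or.inl ⟨?_, ?_⟩⟩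
    · rw [actP_mul, hα1, actP_inv_cancel hβ1]
    · rw [actP_mul, hα2, actP_inv_cancel hβ2]
  · intro T1 T2 h
    obtain ⟨W, F, h6, hPM, hedge, -, -⟩ := struct h
    exact ⟨W, F, h6, hPM, hedge⟩
end

section
/- Let M be the 0-1 matrix whose rows are indexed by the edges of K_n and whose columns are indexed by the 3·C(n,4) distinct 4-cycles of K_n, with M_{e,C} = 1 iff edge e belongs to cycle C. Then for n ≥ 5 the rows of M are linearly independent over the rationals; that is, M has full rank C(n,2). -/
open Finset

lemma card4' {α : Type} [DecidableEq α] (a b c d : α) : ({a,b,c,d} : Finset α).card ≤ 4 :=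
  (Finset.card_insert_le _ _).trans (Nat.succ_le_succ ((Finset.card_insert_le _ _).trans
    (Nat.succ_le_succ ((Finset.card_insert_le _ _).trans (by simp)))))

lemma cyc_sum' {n : ℕ} (G : Sym2 (Fin n) → ℚ) (hG : ∀ s, s.IsDiag → G s = 0)
    (a b c d : Fin n) (hab : a ≠ b) (hac : a ≠ c) (had : a ≠ d)
    (hbc : b ≠ c) (hbd : b ≠ d) (hcd : c ≠ d) :
    ∑ e : {e : Sym2 (Fin n) // ¬ e.IsDiag},
        G e.val * (if (e : Sym2 (Fin n)) ∈ cyc a b c d then (1:ℚ) else 0)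
      = G s(a,b) + G s(b,c) + G s(c,d) + G s(d,a) := by
  have h1 : ∑ e : {e : Sym2 (Fin n) // ¬ e.IsDiag},
      G e.val * (if (e : Sym2 (Fin n)) ∈ cyc a b c d then (1:ℚ) else 0)
      = ∑ s : Sym2 (Fin n), G s * (if s ∈ cyc a b c d then (1:ℚ) else 0) := by
    rw [← Finset.sum_subtype (Finset.univ.filter (fun s : Sym2 (Fin n) => ¬ s.IsDiag))
      (by simp) (fun s => G s * (if s ∈ cyc a b c d then (1:ℚ) else 0))]
    apply Finset.sum_subset (Finset.filter_subset _ _)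
    intro x _ hx
    simp only [Finset.mem_filter, Finset.mem_univ, true_and, not_not] at hx
    rw [hG x hx, zero_mul]
  rw [h1]
  simp only [mul_ite, mul_one, mul_zero]
  rw [Finset.sum_ite_mem, Finset.univ_inter]
  unfold cyc
  rw [Finset.sum_insert (by simp [Sym2.eq_iff]; tauto),
      Finset.sum_insert (by simp [Sym2.eq_iff]; tauto),
      Finset.sum_insert (by simp [Sym2.eq_iff]; tauto),
      Finset.sum_singleton]
  ring

theorem pair_inclusion_matrix_full_rank (n : ℕ) (hn : 5 ≤ n) :
    LinearIndependent ℚ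
      (fun (e : {e : Sym2 (Fin n) // ¬ e.IsDiag}) =>
        (fun (C : {C : Finset (Sym2 (Fin n)) // IsCycle4 C}) =>
          if (e : Sym2 (Fin n)) ∈ (C : Finset (Sym2 (Fin n))) then (1 : ℚ) else 0)) := by
  rw [Fintype.linearIndependent_iff]
  intro g hg e
  set G : Sym2 (Fin n) → ℚ := fun s => if h : s.IsDiag then 0 else g ⟨s, h⟩ with hGdef
  have hG0 : ∀ s, s.IsDiag → G s = 0 := by intro s hs; simp [hGdef, hs]
  have hGg : ∀ e : {e : Sym2 (Fin n) // ¬ e.IsDiag}, G e.val = g e := by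
    intro e; simp [hGdef, e.2]
  have hrel : ∀ a b c d : Fin n, a ≠ b → a ≠ c → a ≠ d → b ≠ c → b ≠ d → c ≠ d →
      G s(a,b) + G s(b,c) + G s(c,d) + G s(d,a) = 0 := by
    intro a b c d hab hac had hbc hbd hcd
    have hc : IsCycle4 (cyc a b c d) := ⟨a, b, c, d, hab, hac, had, hbc, hbd, hcd, rfl⟩
    have h0 := congrFun hg ⟨cyc a b c d, hc⟩
    simp only [Finset.sum_apply, Pi.smul_apply, smul_eq_mul, Pi.zero_apply] at h0
    have h0' : ∑ x : {e : Sym2 (Fin n) // ¬ e.IsDiag},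
        G x.val * (if (x : Sym2 (Fin n)) ∈ cyc a b c d then (1:ℚ) else 0) = 0 := by
      refine Eq.trans ?_ h0
      exact Finset.sum_congr rfl fun x _ => by rw [hGg]
    exact (cyc_sum' G hG0 a b c d hab hac had hbc hbd hcd).symm.trans h0'
  have hdisj : ∀ a b c d : Fin n, a ≠ b → a ≠ c → a ≠ d → b ≠ c → b ≠ d → c ≠ d →
      G s(a,c) + G s(b,d) = 0 := by
    intro a b c d hab hac had hbc hbd hcd
    have R1 := hrel a b c d hab hac had hbc hbd hcd
    have R2 := hrel a b d c hab had hac hbd hbc hcd.symm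
    have R3 := hrel a c b d hac hab had hbc.symm hcd hbd
    have e1 : s(d,c) = s(c,d) := Sym2.eq_swap
    have e2 : s(c,a) = s(a,c) := Sym2.eq_swap
    have e3 : s(c,b) = s(b,c) := Sym2.eq_swap
    rw [e1, e2] at R2
    rw [e3] at R3
    linarith
  have hzero : ∀ a b : Fin n, a ≠ b → G s(a,b) = 0 := by
    intro a b hab
    have hcard : ∀ s : Finset (Fin n), s.card ≤ 4 → ∃ x, x ∉ s := by
      intro s hs
      by_contra h
      push_neg at h
      have hsub : (Finset.univ : Finset (Fin n)) ⊆ s := fun x _ => h x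
      have := Finset.card_le_card hsub
      simp [Fintype.card_fin] at this
      omega
    obtain ⟨c, hc⟩ := hcard {a, b, b, b} (card4' _ _ _ _)
    obtain ⟨d, hd⟩ := hcard {a, b, c, c} (card4' _ _ _ _)
    obtain ⟨e', he⟩ := hcard {a, b, c, d} (card4' _ _ _ _)
    simp only [Finset.mem_insert, Finset.mem_singleton, not_or] at hc hd he
    obtain ⟨hca, hcb, -⟩ := hc
    obtain ⟨hda, hdb, hdc, -⟩ := hd
    obtain ⟨hea, heb, hec, hed⟩ := he
    have hac' : a ≠ c := fun h => hca h.symm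
    have hbc' : b ≠ c := fun h => hcb h.symm
    have had' : a ≠ d := fun h => hda h.symm
    have hbd' : b ≠ d := fun h => hdb h.symm
    have hcd' : c ≠ d := fun h => hdc h.symm
    have hae : a ≠ e' := fun h => hea h.symm
    have hbe : b ≠ e' := fun h => heb h.symm
    have hce : c ≠ e' := fun h => hec h.symm
    have hde : d ≠ e' := fun h => hed h.symm
    have P1 := hdisj a c b d hac' hab had' hbc'.symm hcd' hbd'
    have P2 := hdisj c b d e' hbc'.symm hcd' hce hbd' hbe hde
    have P3 := hdisj b a e' c hab.symm hbe hbc' hae hac' hce.symm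
    have P4 := hdisj a d c e' had' hac' hae hcd'.symm hde hce
    have P5 := hdisj d a e' b had'.symm hde hbd'.symm hae hab hbe.symm
    linarith
  rw [← hGg e]
  obtain ⟨s, hs⟩ := e
  induction s using Sym2.ind with
  | _ x y =>
    exact hzero x y (by simpa [Sym2.mk_isDiag_iff] using hs)
end
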